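/- Let X₁, X₂, … be i.i.d. exponential random variables with mean 1, and let λ₁, λ₂, … be positive real numbers. Then for any t ≥ 0 and any integers k > m ≥ 0: ℙ(Σ_{i=1}^k X_i/λ_i ≤ t and Σ_{i=1}^m X_i/λ_i + Σ_{i=k+1}^{2k−m} X_i/λ_i ≤ t) ≤ ((e t)^{2k−m} / ((k−m)^{2k−2m} m^m)) · ∏_{i=1}^{2k−m} λ_i, where 0⁰ is interpreted as 1 when m = 0. -/

import Mathlib

/-!
On the event, adding the two constraints gives `∑_{i < 2k-m} wᵢ Xᵢ ≤ 2t` with weights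
`wᵢ = 2/λᵢ` for `i < m` and `wᵢ = 1/λᵢ` otherwise. For a weighted sum of `n` independent
standard exponentials, the Chernoff bound with `𝔼 e^{-θ w X} = (1 + θw)⁻¹ ≤ (θw)⁻¹` and
`θ = n/r` gives `ℙ(∑ wᵢ Xᵢ ≤ r) ≤ (er/n)ⁿ / ∏ wᵢ`. With `a = k - m` and `n = 2a + m`, what remains
is `2^{2a} / nⁿ ≤ 1 / (a^{2a} mᵐ)`, i.e. `(2a)^{2a} mᵐ ≤ (2a + m)^{2a + m}`.
-/

open MeasureTheory ProbabilityTheory Real Finset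

lemma exponentialPDF_mul_ofReal_exp {r t : ℝ} (hr : 0 < r) (ht : t < r) (x : ℝ) :
    exponentialPDF r x * ENNReal.ofReal (exp (t * x))
      = ENNReal.ofReal (r / (r - t)) * exponentialPDF (r - t) x := by
  have hrt : 0 < r - t := sub_pos.mpr ht
  rcases lt_or_ge x 0 with hx | hx
  · simp only [exponentialPDF_of_neg hx, zero_mul, mul_zero]
  · rw [exponentialPDF_of_nonneg hx, exponentialPDF_of_nonneg hx,
      ← ENNReal.ofReal_mul (by positivity), ← ENNReal.ofReal_mul (by positivity), mul_assoc,
      ← exp_add, ← mul_assoc, div_mul_cancel₀ r hrt.ne']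
    ring_nf

lemma lintegral_exp_mul_expMeasure {r t : ℝ} (hr : 0 < r) (ht : t < r) :
    ∫⁻ x, ENNReal.ofReal (exp (t * x)) ∂expMeasure r = ENNReal.ofReal (r / (r - t)) := by
  have hpdf : Measurable (exponentialPDF r) := (measurable_exponentialPDFReal r).ennreal_ofReal
  change ∫⁻ x, _ ∂volume.withDensity (exponentialPDF r) = _
  rw [lintegral_withDensity_eq_lintegral_mul _ hpdf (by fun_prop)]
  simp only [Pi.mul_apply, exponentialPDF_mul_ofReal_exp hr ht]
  rw [lintegral_const_mul' _ _ ENNReal.ofReal_ne_top,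
    lintegral_exponentialPDF_eq_one (sub_pos.mpr ht), mul_one]

lemma mgf_id_expMeasure {r t : ℝ} (hr : 0 < r) (ht : t < r) :
    mgf id (expMeasure r) t = r / (r - t) := by
  rw [mgf, integral_eq_lintegral_of_nonneg_ae (ae_of_all _ fun x => (exp_pos _).le)
    (by fun_prop)]
  simp only [id, lintegral_exp_mul_expMeasure hr ht]
  exact ENNReal.toReal_ofReal (div_pos hr (sub_pos.mpr ht)).le

lemma mgf_eq_of_map_eq_expMeasure {Ω : Type*} [MeasurableSpace Ω] {μ : Measure Ω} {X : Ω → ℝ}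
    {r t : ℝ} (hX : AEMeasurable X μ) (hlaw : μ.map X = expMeasure r) (hr : 0 < r) (ht : t < r) :
    mgf X μ t = r / (r - t) := by
  rw [← mgf_id_map hX, hlaw, mgf_id_expMeasure hr ht]

section WeightedSum

variable {Ω ι : Type*} [MeasurableSpace Ω] {P : Measure Ω} [IsProbabilityMeasure P]
  {X : ι → Ω → ℝ} {w : ι → ℝ} {s : Finset ι}

lemma measureReal_sum_mul_le_le_exp_mul_prod (hmeas : ∀ i, Measurable (X i))
    (hindep : iIndepFun X P) (hdist : ∀ i, P.map (X i) = expMeasure 1)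
    (hw : ∀ i ∈ s, 0 < w i) (r : ℝ) {θ : ℝ} (hθ : 0 < θ) :
    P.real {ω | ∑ i ∈ s, w i * X i ω ≤ r} ≤ exp (θ * r) * ∏ i ∈ s, (θ * w i)⁻¹ := by
  set Y : ι → Ω → ℝ := fun i ω => w i * X i ω
  have hYmeas : ∀ i, Measurable (Y i) := fun i => (hmeas i).const_mul _
  have hYindep : iIndepFun Y P :=
    hindep.comp (fun i x => w i * x) fun i => measurable_id.const_mul _
  have hmgf : ∀ i ∈ s, mgf (Y i) P (-θ) = (1 + θ * w i)⁻¹ := fun i hi => by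
    rw [mgf_const_mul, mgf_eq_of_map_eq_expMeasure (hmeas i).aemeasurable (hdist i) one_pos
      (by nlinarith [hw i hi])]
    ring
  have hint : ∀ i ∈ s, Integrable (fun ω => exp (-θ * Y i ω)) P := fun i hi =>
    mgf_pos_iff.mp ((hmgf i hi).symm ▸ inv_pos.mpr (by nlinarith [hw i hi]))
  calc P.real {ω | ∑ i ∈ s, w i * X i ω ≤ r}
      = P.real {ω | (∑ i ∈ s, Y i) ω ≤ r} := by simp only [Finset.sum_apply, Y]
    _ ≤ exp (-(-θ) * r) * mgf (∑ i ∈ s, Y i) P (-θ) :=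
        measure_le_le_exp_mul_mgf r (neg_nonpos.mpr hθ.le)
          (hYindep.integrable_exp_mul_sum hYmeas hint)
    _ = exp (θ * r) * ∏ i ∈ s, (1 + θ * w i)⁻¹ := by
        rw [hYindep.mgf_sum hYmeas, neg_neg, prod_congr rfl hmgf]
    _ ≤ exp (θ * r) * ∏ i ∈ s, (θ * w i)⁻¹ := by
        refine mul_le_mul_of_nonneg_left (prod_le_prod (fun i hi => ?_) fun i hi => ?_)
          (exp_pos _).le
        · exact inv_nonneg.mpr (by nlinarith [hw i hi])
        · exact inv_anti₀ (mul_pos hθ (hw i hi)) (le_add_of_nonneg_left zero_le_one)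

lemma measure_sum_mul_le_le_of_pos (hmeas : ∀ i, Measurable (X i))
    (hindep : iIndepFun X P) (hdist : ∀ i, P.map (X i) = expMeasure 1)
    (hw : ∀ i ∈ s, 0 < w i) {r : ℝ} (hr : 0 < r) :
    P {ω | ∑ i ∈ s, w i * X i ω ≤ r} ≤ ENNReal.ofReal ((exp 1 * r / #s) ^ #s / ∏ i ∈ s, w i) := by
  rcases s.eq_empty_or_nonempty with rfl | hs
  · simpa using prob_le_one
  have hn : (0 : ℝ) < #s := by exact_mod_cast hs.card_pos
  rw [← ofReal_measureReal]
  refine ENNReal.ofReal_le_ofReal <|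
    (measureReal_sum_mul_le_le_exp_mul_prod hmeas hindep hdist hw r (div_pos hn hr)).trans_eq ?_
  rw [prod_inv_distrib, prod_mul_distrib, prod_const,
    div_mul_cancel₀ _ hr.ne', ← exp_one_pow, mul_inv, ← inv_pow, inv_div]
  ring

lemma measure_sum_mul_le_le (hmeas : ∀ i, Measurable (X i))
    (hindep : iIndepFun X P) (hdist : ∀ i, P.map (X i) = expMeasure 1)
    (hw : ∀ i ∈ s, 0 < w i) {r : ℝ} (hr : 0 ≤ r) :
    P {ω | ∑ i ∈ s, w i * X i ω ≤ r} ≤ ENNReal.ofReal ((exp 1 * r / #s) ^ #s / ∏ i ∈ s, w i) := by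
  rcases hr.lt_or_eq with hr | rfl
  · exact measure_sum_mul_le_le_of_pos hmeas hindep hdist hw hr
  have hcont : Continuous fun r => ENNReal.ofReal ((exp 1 * r / #s) ^ #s / ∏ i ∈ s, w i) :=
    ENNReal.continuous_ofReal.comp (by fun_prop)
  refine ge_of_tendsto ((hcont.tendsto 0).mono_left (nhdsWithin_le_nhds (s := Set.Ioi 0))) ?_
  filter_upwards [self_mem_nhdsWithin] with ε (hε : 0 < ε)
  exact (measure_mono fun ω (hω : _ ≤ 0) => hω.trans hε.le).trans
    (measure_sum_mul_le_le_of_pos hmeas hindep hdist hw hε)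

end WeightedSum

lemma pow_self_mul_pow_self_le (a b : ℕ) : a ^ a * b ^ b ≤ (a + b) ^ (a + b) := by
  rw [pow_add]
  exact Nat.mul_le_mul (Nat.pow_le_pow_left (Nat.le_add_right a b) a)
    (Nat.pow_le_pow_left (Nat.le_add_left b a) b)

lemma exp_mul_two_mul_div_pow_div_le {k m : ℕ} (hmk : m ≤ k) {t L : ℝ} (ht : 0 ≤ t) (hL : 0 < L) :
    (exp 1 * (2 * t) / (2 * k - m : ℕ)) ^ (2 * k - m) / (2 ^ m / L)
      ≤ (exp 1 * t) ^ (2 * k - m) / (((k : ℝ) - m) ^ (2 * k - 2 * m) * (m : ℝ) ^ m) * L := by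
  obtain ⟨a, rfl⟩ := Nat.exists_eq_add_of_le hmk
  rw [show 2 * (m + a) - m = 2 * a + m by omega, show 2 * (m + a) - 2 * m = 2 * a by omega,
    show ((m + a : ℕ) : ℝ) - m = a by push_cast; ring]
  have hkey : ((2 * a) ^ (2 * a) * m ^ m : ℝ) ≤ ((2 * a + m : ℕ) : ℝ) ^ (2 * a + m) := by
    exact_mod_cast pow_self_mul_pow_self_le (2 * a) m
  have hn : (0 : ℝ) < ((2 * a + m : ℕ) : ℝ) ^ (2 * a + m) := by
    exact_mod_cast Nat.pow_self_pos
  have hD : (0 : ℝ) < (a : ℝ) ^ (2 * a) * (m : ℝ) ^ m := by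
    have ha : (0 : ℝ) < (a : ℝ) ^ a := by exact_mod_cast Nat.pow_self_pos
    have hm : (0 : ℝ) < (m : ℝ) ^ m := by exact_mod_cast Nat.pow_self_pos
    rw [mul_comm 2 a, pow_mul]
    positivity
  calc (exp 1 * (2 * t) / (2 * a + m : ℕ)) ^ (2 * a + m) / (2 ^ m / L)
      = (exp 1 * t) ^ (2 * a + m) * L * (2 ^ (2 * a) / ((2 * a + m : ℕ) : ℝ) ^ (2 * a + m)) := by
        rw [div_pow, mul_pow, mul_pow, pow_add 2]
        field_simp
        ring
    _ ≤ (exp 1 * t) ^ (2 * a + m) * L * (1 / ((a : ℝ) ^ (2 * a) * (m : ℝ) ^ m)) := by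
        refine mul_le_mul_of_nonneg_left ?_ (by positivity)
        rw [div_le_div_iff₀ hn hD, one_mul]
        calc (2 : ℝ) ^ (2 * a) * ((a : ℝ) ^ (2 * a) * (m : ℝ) ^ m)
            = (2 * a) ^ (2 * a) * m ^ m := by ring
          _ ≤ _ := hkey
    _ = _ := by ring

lemma range_filter_lt_of_le {m n : ℕ} (h : m ≤ n) : (range n).filter (· < m) = range m := by
  ext i
  simp only [mem_filter, mem_range]
  omega

lemma sum_range_ite_lt_mul {R : Type*} [CommSemiring R] {m n : ℕ} (h : m ≤ n) (f : ℕ → R) :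
    ∑ i ∈ range n, (if i < m then 2 else 1) * f i = ∑ i ∈ range n, f i + ∑ i ∈ range m, f i := by
  rw [← range_filter_lt_of_le h, sum_filter, ← sum_add_distrib]
  refine sum_congr rfl fun i _ => ?_
  split_ifs <;> ring

lemma prod_range_ite_lt {M : Type*} [CommMonoid M] {m n : ℕ} (h : m ≤ n) (a : M) :
    ∏ i ∈ range n, (if i < m then a else 1) = a ^ m := by
  rw [← prod_filter, range_filter_lt_of_le h, prod_const, card_range]

/-- **Joint lower-tail estimate for overlapping weighted sums of exponentials**
(Lemma 2.2). Let `X₁, X₂, …` be i.i.d. mean-one exponential random variables and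
`λ₁, λ₂, … > 0`.  Then for any `t ≥ 0` and integers `k > m ≥ 0`,
`ℙ(Σᵢ₌₁ᵏ Xᵢ/λᵢ ≤ t, Σᵢ₌₁ᵐ Xᵢ/λᵢ + Σᵢ₌ₖ₊₁^{2k-m} Xᵢ/λᵢ ≤ t)
  ≤ ((et)^{2k-m}/((k-m)^{2k-2m} m^m)) ∏ᵢ₌₁^{2k-m} λᵢ`,
with `0⁰ = 1` when `m = 0` (indices here run over `Finset.range`). -/
theorem exponential_sum_joint_tail {Ω : Type} [MeasurableSpace Ω] (P : Measure Ω)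
    [IsProbabilityMeasure P]
    (X : ℕ → Ω → ℝ) (hmeas : ∀ i, Measurable (X i))
    (hindep : iIndepFun X P)
    (hdist : ∀ i, Measure.map (X i) P = expMeasure 1)
    (lam : ℕ → ℝ) (hlam : ∀ i, 0 < lam i) :
    ∀ (t : ℝ) (k m : ℕ), 0 ≤ t → m < k →
      P {o | (∑ i ∈ Finset.range k, X i o / lam i) ≤ t ∧
             (∑ i ∈ Finset.range m, X i o / lam i)
               + (∑ i ∈ Finset.Ico k (2 * k - m), X i o / lam i) ≤ t}
        ≤ ENNReal.ofReal
            ((Real.exp 1 * t) ^ (2 * k - m)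
              / (((k : ℝ) - m) ^ (2 * k - 2 * m) * (m : ℝ) ^ m)
              * ∏ i ∈ Finset.range (2 * k - m), lam i) := by
  intro t k m ht hmk
  -- the first `m` summands occur in both constraints, so adding them doubles their weight
  let w : ℕ → ℝ := fun i => (if i < m then 2 else 1) / lam i
  have hw : ∀ i ∈ range (2 * k - m), 0 < w i := fun i _ =>
    div_pos (by split_ifs <;> norm_num) (hlam i)
  have hsub : {o | (∑ i ∈ range k, X i o / lam i) ≤ t ∧
      (∑ i ∈ range m, X i o / lam i) + (∑ i ∈ Ico k (2 * k - m), X i o / lam i) ≤ t}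
      ⊆ {o | ∑ i ∈ range (2 * k - m), w i * X i o ≤ 2 * t} := by
    rintro o ⟨hk, hm⟩
    have hsplit := sum_range_add_sum_Ico (fun i => X i o / lam i) (by omega : k ≤ 2 * k - m)
    have hdouble := sum_range_ite_lt_mul (by omega : m ≤ 2 * k - m) fun i => X i o / lam i
    simp only [Set.mem_ofPred_eq, w, div_mul_eq_mul_div, mul_div_assoc] at hdouble ⊢
    linarith
  have hprod : ∏ i ∈ range (2 * k - m), w i = 2 ^ m / ∏ i ∈ range (2 * k - m), lam i := by
    rw [prod_div_distrib, prod_range_ite_lt (by omega)]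
  calc _ ≤ P {o | ∑ i ∈ range (2 * k - m), w i * X i o ≤ 2 * t} := measure_mono hsub
    _ ≤ _ := measure_sum_mul_le_le hmeas hindep hdist hw (by positivity)
    _ ≤ _ := by
      rw [card_range, hprod]
      exact ENNReal.ofReal_le_ofReal <|
        exp_mul_two_mul_div_pow_div_le hmk.le ht (prod_pos fun i _ => hlam i)
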